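/- arXiv:1205.0357 — 2 statements merged into one kernel-verified Lean document; each statement's English description precedes it below -/
import Mathlib

section
/- Every pair g₁, g₂ of compatible canonical partial term graphs (i.e., such that {g₁, g₂} has an upper bound) in the partially ordered set of canonical partial term graphs over Σ ordered by ≤⊥r has a least upper bound. -/
set_option autoImplicit false

namespace TGR

/-- A signature: a type of symbols, each with a finite arity. -/
structure Signature where
  Sym : Type
  ar : Sym → ℕ

/-- The signature `Σ_⊥`: `Σ` extended by a fresh nullary symbol `⊥` (here `none`). -/
def Signature.bot (S : Signature) : Signature where
  Sym := Option S.Sym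
  ar := fun o => match o with
    | none => 0
    | some f => S.ar f

/-- A rooted graph over a signature `S` with nodes `N`: a labelling, a successor
function respecting arities, and a root node. -/
structure TermGraph (S : Signature) (N : Type) where
  lab : N → S.Sym
  suc : (n : N) → Fin (S.ar (lab n)) → N
  root : N

namespace TermGraph

variable {S : Signature} {N M K : Type}

/-- `g.IsPos π n`: `π` is a position (path of successor indices from the root) of node `n`. -/
inductive IsPos (g : TermGraph S N) : List ℕ → N → Prop
  | root : IsPos g [] g.root
  | step {π : List ℕ} {n : N} (h : IsPos g π n) (i : Fin (S.ar (g.lab n))) :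
      IsPos g (π ++ [(i : ℕ)]) (g.suc n i)

/-- All nodes are reachable from the root. -/
def Reachable (g : TermGraph S N) : Prop :=
  ∀ n : N, ∃ π : List ℕ, g.IsPos π n

/-- The set of positions of `g`. -/
def pos (g : TermGraph S N) : Set (List ℕ) :=
  {π | ∃ n : N, g.IsPos π n}

/-- The set of positions of node `n` in `g`. -/
def nodePos (g : TermGraph S N) (n : N) : Set (List ℕ) :=
  {π | g.IsPos π n}

/-- `π ∼_g π'`: `π` and `π'` are positions of the same node. -/
def Aliases (g : TermGraph S N) (π π' : List ℕ) : Prop :=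
  ∃ n : N, g.IsPos π n ∧ g.IsPos π' n

/-- A position is acyclic if it passes no node twice. -/
def IsAcyclicPos (g : TermGraph S N) (π : List ℕ) : Prop :=
  ∀ (π₁ π₂ : List ℕ) (n : N), π₁ <+: π₂ → π₂ <+: π →
    g.IsPos π₁ n → g.IsPos π₂ n → π₁ = π₂

/-- The set of acyclic positions of node `n` in `g`. -/
def nodePosAcy (g : TermGraph S N) (n : N) : Set (List ℕ) :=
  {π | g.IsPos π n ∧ g.IsAcyclicPos π}

/-- The set of acyclic positions of `g`. -/
def posAcy (g : TermGraph S N) : Set (List ℕ) :=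
  {π | (∃ n : N, g.IsPos π n) ∧ g.IsAcyclicPos π}

/-- The depth of a node: the minimal length of its positions. -/
noncomputable def depth (g : TermGraph S N) (n : N) : ℕ :=
  sInf {k : ℕ | ∃ π : List ℕ, g.IsPos π n ∧ π.length = k}

open Classical in
/-- The (unique) node at a position. -/
noncomputable def nodeAt (g : TermGraph S N) (π : List ℕ) : N :=
  if h : ∃ n : N, g.IsPos π n then h.choose else g.root

/-- The label `g(π)` at a position. -/
noncomputable def labAt (g : TermGraph S N) (π : List ℕ) : S.Sym :=
  g.lab (g.nodeAt π)

/-- `Δ`-homomorphism: root, labelling and successor conditions, the latter two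
suspended on `Δ`-labelled nodes. -/
structure IsDHom (Δ : Set S.Sym) (g : TermGraph S N) (h : TermGraph S M)
    (φ : N → M) : Prop where
  root_eq : φ g.root = h.root
  lab_eq : ∀ n : N, g.lab n ∉ Δ → h.lab (φ n) = g.lab n
  suc_eq : ∀ n : N, g.lab n ∉ Δ → ∀ (i : ℕ) (hi : i < S.ar (g.lab n))
      (hi' : i < S.ar (h.lab (φ n))),
      φ (g.suc n ⟨i, hi⟩) = h.suc (φ n) ⟨i, hi'⟩

/-- Rigidity: `Pa_g(n) = Pa_h(φ n)` for all non-`Δ`-labelled nodes `n`. -/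
def IsRigid (Δ : Set S.Sym) (g : TermGraph S N) (h : TermGraph S M)
    (φ : N → M) : Prop :=
  ∀ n : N, g.lab n ∉ Δ → g.nodePosAcy n = h.nodePosAcy (φ n)

/-- Rigid `Δ`-homomorphism. -/
def IsRigidDHom (Δ : Set S.Sym) (g : TermGraph S N) (h : TermGraph S M)
    (φ : N → M) : Prop :=
  IsDHom Δ g h φ ∧ IsRigid Δ g h φ

/-- Isomorphism of term graphs: a homomorphism with an inverse homomorphism. -/
def Iso (g : TermGraph S N) (h : TermGraph S M) : Prop :=
  ∃ (φ : N → M) (ψ : M → N), IsDHom ∅ g h φ ∧ IsDHom ∅ h g ψ ∧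
    (∀ n : N, ψ (φ n) = n) ∧ (∀ m : M, φ (ψ m) = m)

/-- A partial term graph (over `Σ_⊥`) is total if no node is labelled `⊥`. -/
def Total (g : TermGraph S.bot N) : Prop := ∀ n : N, g.lab n ≠ none

/-- Rigid `⊥`-homomorphism between partial term graphs. -/
def IsRigidBotHom (g : TermGraph S.bot N) (h : TermGraph S.bot M)
    (φ : N → M) : Prop :=
  IsRigidDHom ({none} : Set (Option S.Sym)) g h φ

/-- The `⊥`-depth of a partial term graph: the minimal depth of a `⊥`-labelled
node, `ω` (`⊤`) if there is none. -/
noncomputable def botDepth (g : TermGraph S.bot N) : ℕ∞ :=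
  sInf {d : ℕ∞ | ∃ n : N, g.lab n = none ∧ (g.depth n : ℕ∞) = d}

/-- `m` is an acyclic predecessor of `n`: some acyclic position `π ++ [i]` of `n`
has `π` a position of `m`. -/
def acyPred (g : TermGraph S N) (n : N) : Set N :=
  {m | ∃ (π : List ℕ) (i : ℕ), (π ++ [i]) ∈ g.nodePosAcy n ∧ g.IsPos π m}

/-- Retained nodes of the truncation at depth `d`: the least set of nodes
containing all nodes of depth `< d` and closed under acyclic predecessors. -/
inductive Retained (g : TermGraph S N) (d : ℕ) : N → Prop
  | shallow {n : N} : g.depth n < d → Retained g d n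
  | pred {n m : N} : Retained g d n → m ∈ g.acyPred n → Retained g d m

theorem not_retained_zero {g : TermGraph S N} (n : N) : ¬ g.Retained 0 n := by
  intro h
  induction h with
  | shallow hd => exact Nat.not_lt_zero _ hd
  | pred _ _ ih => exact ih

/-- Fringe nodes of the truncation at depth `d` (a pair `(n, i)` stands for the
fresh node `n^i`); at depth `0` the fringe is just (a copy of) the root. -/
def IsFringe (g : TermGraph S.bot N) (d : ℕ) (p : N × ℕ) : Prop :=
  if d = 0 then p = (g.root, 0)
  else g.Retained d p.1 ∧ ∃ h : p.2 < S.bot.ar (g.lab p.1),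
    (¬ g.Retained d (g.suc p.1 ⟨p.2, h⟩) ∨
      (d - 1 ≤ g.depth p.1 ∧ p.1 ∉ g.acyPred (g.suc p.1 ⟨p.2, h⟩)))

/-- The node set of the rigid truncation: retained nodes plus fringe nodes. -/
def TNode (g : TermGraph S.bot N) (d : ℕ) : Type :=
  {x : N ⊕ (N × ℕ) // Sum.elim (g.Retained d) (g.IsFringe d) x}

def truncLab (g : TermGraph S.bot N) (d : ℕ) (x : TNode g d) : S.bot.Sym :=
  Sum.elim (fun n => g.lab n) (fun _ => none) x.1

open Classical in
noncomputable def truncSuc (g : TermGraph S.bot N) (d : ℕ) :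
    (x : TNode g d) → Fin (S.bot.ar (truncLab g d x)) → TNode g d
  | ⟨Sum.inl n, hn⟩ => fun i =>
      if hf : g.IsFringe d (n, (i : ℕ)) then ⟨Sum.inr (n, (i : ℕ)), hf⟩
      else
        ⟨Sum.inl (g.suc n ⟨(i : ℕ), i.isLt⟩), by
          show g.Retained d (g.suc n ⟨(i : ℕ), i.isLt⟩)
          rcases Nat.eq_zero_or_pos d with hd | hd
          · subst hd
            exact ((not_retained_zero n) hn).elim
          · by_contra hc
            apply hf
            show g.IsFringe d (n, (i : ℕ))
            unfold IsFringe
            rw [if_neg (Nat.pos_iff_ne_zero.mp hd)]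
            exact ⟨hn, i.isLt, Or.inl hc⟩⟩
  | ⟨Sum.inr p, hp⟩ => fun i => absurd i.isLt (Nat.not_lt_zero _)

noncomputable def truncRoot (g : TermGraph S.bot N) (d : ℕ) : TNode g d :=
  if hd : d = 0 then
    ⟨Sum.inr (g.root, 0), by
      subst hd
      show g.IsFringe 0 (g.root, 0)
      simp [IsFringe]⟩
  else
    ⟨Sum.inl g.root, by
      show g.Retained d g.root
      exact Retained.shallow (lt_of_le_of_lt
        (Nat.sInf_le ⟨[], IsPos.root, rfl⟩) (Nat.pos_of_ne_zero hd))⟩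

/-- The rigid truncation `g†d` of a partial term graph at finite depth `d`. -/
noncomputable def trunc (g : TermGraph S.bot N) (d : ℕ) :
    TermGraph S.bot (TNode g d) where
  lab := truncLab g d
  suc := truncSuc g d
  root := truncRoot g d

end TermGraph

/-- A canonical term graph: a term graph whose nodes are sets of positions,
each node being exactly its set of positions, with all nodes reachable. -/
structure CTG (S : Signature) where
  nodes : Set (Set (List ℕ))
  tg : TermGraph S ↥nodes
  reach : tg.Reachable
  canon : ∀ n : ↥nodes, (n : Set (List ℕ)) = tg.nodePos n

namespace CTG

variable {S : Signature}

def pos (g : CTG S) : Set (List ℕ) := g.tg.pos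
def Aliases (g : CTG S) : List ℕ → List ℕ → Prop := g.tg.Aliases
def posAcy (g : CTG S) : Set (List ℕ) := g.tg.posAcy
noncomputable def labAt (g : CTG S) : List ℕ → S.Sym := g.tg.labAt

/-- A canonical partial term graph is total if it has no `⊥`-labelled node. -/
def Total (g : CTG S.bot) : Prop := g.tg.Total

/-- The rigid partial order `g ≤⊥r h`: there is a rigid `⊥`-homomorphism
from `g` to `h`. -/
def LeR (g h : CTG S.bot) : Prop :=
  ∃ φ, TermGraph.IsRigidBotHom g.tg h.tg φ

noncomputable def botDepth (g : CTG S.bot) : ℕ∞ := g.tg.botDepth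

/-- `TruncIso g h d`: the rigid truncations of `g` and `h` at depth `d ≤ ω`
are isomorphic (`g†ω = g`). -/
def TruncIso {N M : Type} (g : TermGraph S.bot N) (h : TermGraph S.bot M)
    (d : ℕ∞) : Prop :=
  (d = ⊤ → TermGraph.Iso g h) ∧
  ∀ k : ℕ, d = (k : ℕ∞) → TermGraph.Iso (g.trunc k) (h.trunc k)

/-- The rigid similarity `sim†(g,h)`: the maximal `d ≤ ω` such that
`g†d ≅ h†d`. -/
noncomputable def simr (g h : CTG S.bot) : ℕ∞ :=
  sSup {d : ℕ∞ | TruncIso g.tg h.tg d}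

open Classical in
/-- The rigid distance `d†(g,h) = 2^{-sim†(g,h)}` (with `2^{-ω} = 0`). -/
noncomputable def rdist (g h : CTG S.bot) : ℝ :=
  if simr g h = ⊤ then 0 else (1 / 2 : ℝ) ^ (simr g h).toNat

def IsUB (A : Set (CTG S.bot)) (u : CTG S.bot) : Prop := ∀ g ∈ A, LeR g u

def IsLubR (A : Set (CTG S.bot)) (u : CTG S.bot) : Prop :=
  IsUB A u ∧ ∀ v, IsUB A v → LeR u v

def IsLB (A : Set (CTG S.bot)) (l : CTG S.bot) : Prop := ∀ g ∈ A, LeR l g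

def IsGlbR (A : Set (CTG S.bot)) (l : CTG S.bot) : Prop :=
  IsLB A l ∧ ∀ m, IsLB A m → LeR m l

/-- A directed set: non-empty and every two elements have an upper bound inside. -/
def DirectedR (A : Set (CTG S.bot)) : Prop :=
  A.Nonempty ∧ ∀ g ∈ A, ∀ h ∈ A, ∃ u ∈ A, LeR g u ∧ LeR h u

/-- `L` is the limit inferior `⨆_{β<α} ⨅_{β≤ι<α} f ι` of the ordinal-indexed
sequence `(f ι)_{ι<α}` in the rigid partial order. -/
def IsLiminfR (α : Ordinal.{0}) (f : Ordinal.{0} → CTG S.bot) (L : CTG S.bot) : Prop :=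
  ∃ inf : Ordinal.{0} → CTG S.bot,
    (∀ β < α, IsGlbR {g | ∃ ι, β ≤ ι ∧ ι < α ∧ g = f ι} (inf β)) ∧
    IsLubR {g | ∃ β < α, g = inf β} L

/-- Cauchy condition for an ordinal-indexed sequence w.r.t. the rigid distance. -/
def OrdCauchy (α : Ordinal.{0}) (f : Ordinal.{0} → CTG S.bot) : Prop :=
  ∀ ε : ℝ, 0 < ε → ∃ β < α, ∀ ι ι' : Ordinal.{0},
    β < ι → ι < ι' → ι' < α → rdist (f ι) (f ι') < ε

/-- Convergence of an ordinal-indexed sequence to `g` w.r.t. the rigid distance. -/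
def OrdTendsto (α : Ordinal.{0}) (f : Ordinal.{0} → CTG S.bot) (g : CTG S.bot) : Prop :=
  ∀ ε : ℝ, 0 < ε → ∃ β < α, ∀ ι : Ordinal.{0}, β < ι → ι < α → rdist (f ι) g < ε

/-- `u` is the unravelling of `g`: the term tree with the same positions and
labels as `g` and trivial aliasing. -/
def IsUnravelling (g u : CTG S) : Prop :=
  u.pos = g.pos ∧ (∀ π ∈ g.pos, u.labAt π = g.labAt π) ∧
  (∀ π π' : List ℕ, u.Aliases π π' ↔ (π ∈ g.pos ∧ π = π'))

end CTG

/-- A labelled quotient tree over a signature `S`. -/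
structure LQT (S : Signature) where
  P : Set (List ℕ)
  nonempty : P.Nonempty
  l : List ℕ → S.Sym
  rel : List ℕ → List ℕ → Prop
  rel_refl : ∀ π ∈ P, rel π π
  rel_symm : ∀ π π' : List ℕ, rel π π' → rel π' π
  rel_trans : ∀ π π' π'' : List ℕ, rel π π' → rel π' π'' → rel π π''
  rel_mem : ∀ π π' : List ℕ, rel π π' → π ∈ P ∧ π' ∈ P
  reach_mem : ∀ (π : List ℕ) (i : ℕ), π ++ [i] ∈ P → π ∈ P
  reach_ar : ∀ (π : List ℕ) (i : ℕ), π ++ [i] ∈ P → i < S.ar (l π)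
  congr_lab : ∀ π π' : List ℕ, rel π π' → l π = l π'
  congr_suc : ∀ (π π' : List ℕ) (i : ℕ), rel π π' → i < S.ar (l π) →
    rel (π ++ [i]) (π' ++ [i])

end TGR

/-!
The least upper bound `v` of a bounded family `(gᵢ)` is built directly as a canonical term
graph: its nodes are the classes of the least partial equivalence `∼` on positions that
relates `[]` to itself, contains the aliasing of every `gᵢ`, and is closed under the
successors that exist in some `gᵢ`; a class is labelled like any non-`⊥` node of a `gᵢ` at
one of its positions, and `⊥` if there is none. Any upper bound `w` aliases `∼`-related
positions, so a class can be sent to the node of `w` at its positions. This map is rigid: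
two non-`⊥` nodes of the `gᵢ` with the same image in `w` share an acyclic position (by
rigidity), hence lie in the same class. Applied to the given upper bound `u`, the rigidity of
`v → u` and of `gᵢ → u` yields the rigidity of `gᵢ → v`.
-/

namespace TGR

namespace TermGraph

variable {S : Signature} {N M K : Type}

theorem isPos_nil_iff {g : TermGraph S N} {n : N} : g.IsPos [] n ↔ n = g.root := by
  refine ⟨fun h => ?_, fun h => h ▸ IsPos.root⟩
  generalize hπ : ([] : List ℕ) = π at h
  cases h with
  | root => rfl
  | step => simp at hπ

theorem isPos_snoc_iff {g : TermGraph S N} {π : List ℕ} {j : ℕ} {m : N} :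
    g.IsPos (π ++ [j]) m ↔
      ∃ (n : N) (hj : j < S.ar (g.lab n)), g.IsPos π n ∧ m = g.suc n ⟨j, hj⟩ := by
  refine ⟨fun h => ?_, fun ⟨n, hj, hn, hm⟩ => hm ▸ hn.step ⟨j, hj⟩⟩
  generalize hπ : π ++ [j] = π' at h
  cases h with
  | root => simp at hπ
  | step h i =>
    obtain ⟨rfl, hij⟩ := List.append_inj' hπ rfl
    obtain rfl : j = i := by simpa using hij
    exact ⟨_, i.isLt, h, rfl⟩

theorem IsPos.unique {g : TermGraph S N} {π : List ℕ} {n m : N}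
    (hn : g.IsPos π n) (hm : g.IsPos π m) : n = m := by
  induction hn generalizing m with
  | root => exact (isPos_nil_iff.mp hm).symm
  | step _ i ih =>
    obtain ⟨n', _, hn', rfl⟩ := isPos_snoc_iff.mp hm
    cases ih hn'
    rfl

theorem IsPos.of_append {g : TermGraph S N} {σ ρ : List ℕ} {n : N}
    (h : g.IsPos (σ ++ ρ) n) : ∃ m, g.IsPos σ m := by
  induction ρ using List.reverseRecOn generalizing n with
  | nil => exact ⟨n, by simpa using h⟩
  | append_singleton ρ j ih =>
    rw [← List.append_assoc, isPos_snoc_iff] at h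
    obtain ⟨m, -, hm, -⟩ := h
    exact ih hm

theorem IsPos.of_prefix {g : TermGraph S N} {σ π : List ℕ} {n : N}
    (hσ : σ <+: π) (h : g.IsPos π n) : ∃ m, g.IsPos σ m := by
  obtain ⟨ρ, rfl⟩ := hσ
  exact h.of_append

theorem IsPos.append_of_isPos {g : TermGraph S N} {π₁ π₂ ρ : List ℕ} {m n : N}
    (h₁ : g.IsPos π₁ m) (h₂ : g.IsPos π₂ m) (h : g.IsPos (π₂ ++ ρ) n) :
    g.IsPos (π₁ ++ ρ) n := by
  induction ρ using List.reverseRecOn generalizing n with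
  | nil =>
    rw [List.append_nil] at h ⊢
    exact h₂.unique h ▸ h₁
  | append_singleton ρ j ih =>
    rw [← List.append_assoc, isPos_snoc_iff] at h ⊢
    obtain ⟨k, hj, hk, rfl⟩ := h
    exact ⟨k, hj, ih hk, rfl⟩

theorem exists_isAcyclicPos {g : TermGraph S N} {n : N} (h : ∃ π, g.IsPos π n) :
    ∃ π, g.IsPos π n ∧ g.IsAcyclicPos π := by
  obtain ⟨π, hπ, hmin⟩ := WellFounded.has_min (measure List.length).wf {π | g.IsPos π n} h
  refine ⟨π, hπ, fun π₁ π₂ m h₁₂ h₂ hm₁ hm₂ => ?_⟩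
  obtain ⟨ρ, rfl⟩ := h₂
  -- cutting out the cycle between `π₁` and `π₂` would give a shorter position
  have hshort := hmin (π₁ ++ ρ) (hm₁.append_of_isPos hm₂ hπ)
  have hle := h₁₂.length_le
  have hlen : ¬ (π₁ ++ ρ).length < (π₂ ++ ρ).length := hshort
  rw [List.length_append, List.length_append] at hlen
  exact h₁₂.eq_of_length (by omega)

theorem nodeAt_eq {g : TermGraph S N} {π : List ℕ} {n : N} (h : g.IsPos π n) :
    g.nodeAt π = n := by
  have hex : ∃ m, g.IsPos π m := ⟨n, h⟩
  rw [nodeAt, dif_pos hex]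
  exact hex.choose_spec.unique h

theorem ne_none_of_lt_ar {x : S.bot.Sym} {j : ℕ} (h : j < S.bot.ar x) : x ≠ none := by
  rintro rfl
  exact Nat.not_lt_zero _ h

theorem IsPos.lab_ne_none_of_prefix {g : TermGraph S.bot N} {σ π : List ℕ} {m n : N}
    (hσπ : σ <+: π) (hm : g.IsPos σ m) (hn : g.IsPos π n) (hn' : g.lab n ≠ none) :
    g.lab m ≠ none := by
  obtain ⟨ρ, rfl⟩ := hσπ
  cases ρ with
  | nil => rw [List.append_nil] at hn; exact hm.unique hn ▸ hn'
  | cons j ρ =>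
    rw [← List.singleton_append, ← List.append_assoc] at hn
    obtain ⟨k, hk⟩ := hn.of_append
    obtain ⟨m', hj, hm', -⟩ := isPos_snoc_iff.mp hk
    exact hm'.unique hm ▸ ne_none_of_lt_ar hj

abbrev IsBotHom (g : TermGraph S.bot N) (h : TermGraph S.bot M) (α : N → M) : Prop :=
  IsDHom ({none} : Set (Option S.Sym)) g h α

theorem IsPos.map {g : TermGraph S.bot N} {h : TermGraph S.bot M} {α : N → M}
    (hα : IsBotHom g h α) {π : List ℕ} {n : N} (hn : g.IsPos π n) :
    h.IsPos π (α n) := by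
  induction hn with
  | root => rw [hα.root_eq]; exact IsPos.root
  | @step π n _ i ih =>
    have hn : g.lab n ∉ ({none} : Set S.bot.Sym) := ne_none_of_lt_ar i.isLt
    have hi : (i : ℕ) < S.bot.ar (h.lab (α n)) := by rw [hα.lab_eq n hn]; exact i.isLt
    rw [show i = ⟨i, i.isLt⟩ from rfl, hα.suc_eq n hn i i.isLt hi]
    exact ih.step ⟨i, hi⟩

theorem isDHom_of_isPos {Δ : Set S.Sym} {g : TermGraph S N} {h : TermGraph S M}
    {α : N → M} (hg : g.Reachable) (hpos : ∀ π n, g.IsPos π n → h.IsPos π (α n))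
    (hlab : ∀ n, g.lab n ∉ Δ → h.lab (α n) = g.lab n) : IsDHom Δ g h α where
  root_eq := isPos_nil_iff.mp (hpos _ _ IsPos.root)
  lab_eq := hlab
  suc_eq n hn i hi hi' := by
    obtain ⟨π, hπ⟩ := hg n
    exact (hpos _ _ (hπ.step ⟨i, hi⟩)).unique ((hpos _ _ hπ).step ⟨i, hi'⟩)

theorem IsAcyclicPos.of_map {g : TermGraph S.bot N} {h : TermGraph S.bot M} {α : N → M}
    (hα : IsBotHom g h α) {π : List ℕ} (hπ : h.IsAcyclicPos π) : g.IsAcyclicPos π :=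
  fun _ _ _ h₁₂ h₂ hm₁ hm₂ => hπ _ _ _ h₁₂ h₂ (hm₁.map hα) (hm₂.map hα)

theorem IsAcyclicPos.map {g : TermGraph S.bot N} {h : TermGraph S.bot M} {α : N → M}
    (hα : IsBotHom g h α)
    (hinj : ∀ a b, g.lab a ≠ none → g.lab b ≠ none → α a = α b → a = b)
    {π : List ℕ} {n : N} (hn : g.IsPos π n) (hn' : g.lab n ≠ none)
    (hπ : g.IsAcyclicPos π) : h.IsAcyclicPos π := by
  intro π₁ π₂ q h₁₂ h₂ hq₁ hq₂
  obtain ⟨a₂, ha₂⟩ := hn.of_prefix h₂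
  obtain ⟨a₁, ha₁⟩ := hn.of_prefix (h₁₂.trans h₂)
  have ha : a₁ = a₂ := hinj _ _ (ha₁.lab_ne_none_of_prefix (h₁₂.trans h₂) hn hn')
    (ha₂.lab_ne_none_of_prefix h₂ hn hn')
    (((ha₁.map hα).unique hq₁).trans ((ha₂.map hα).unique hq₂).symm)
  exact hπ _ _ _ h₁₂ h₂ ha₁ (ha ▸ ha₂)

theorem isRigid_of_injective {g : TermGraph S.bot N} {h : TermGraph S.bot M} {α : N → M}
    (hα : IsBotHom g h α)
    (hinj : ∀ a b, g.lab a ≠ none → g.lab b ≠ none → α a = α b → a = b)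
    (hback : ∀ n, g.lab n ≠ none → ∀ π ∈ h.nodePosAcy (α n), g.IsPos π n) :
    IsRigidBotHom g h α := by
  refine ⟨hα, fun n hn => ?_⟩
  ext π
  refine ⟨fun ⟨hπ, hacy⟩ => ⟨hπ.map hα, hacy.map hα hinj hπ hn⟩, fun hmem => ?_⟩
  have hπ := hback n hn π hmem
  exact ⟨hπ, hmem.2.of_map hα⟩

theorem exists_isPos_isPos_of_isRigid {g : TermGraph S.bot N} {g' : TermGraph S.bot M}
    {h : TermGraph S.bot K} {α : N → K} {β : M → K}
    (hα : IsRigidBotHom g h α) (hβ : IsRigidBotHom g' h β) {n : N} {m : M}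
    (hn : g.lab n ≠ none) (hm : g'.lab m ≠ none) (hnm : α n = β m)
    (hreach : ∃ π, g.IsPos π n) : ∃ π, g.IsPos π n ∧ g'.IsPos π m := by
  obtain ⟨π, hπ⟩ := exists_isAcyclicPos hreach
  have hπ' : π ∈ g'.nodePosAcy m := by rw [hβ.2 m hm, ← hnm, ← hα.2 n hn]; exact hπ
  exact ⟨π, hπ.1, hπ'.1⟩

end TermGraph

namespace CTG

open TermGraph

variable {S : Signature} {ι : Type} {g : ι → CTG S.bot} {u w : CTG S.bot}
  {φ : ∀ i, (g i).nodes → u.nodes} {ψ : ∀ i, (g i).nodes → w.nodes}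

variable (g) in
inductive LubRel : List ℕ → List ℕ → Prop
  | nil : LubRel [] []
  | of {i : ι} {π π' : List ℕ} {n : (g i).nodes} :
      (g i).tg.IsPos π n → (g i).tg.IsPos π' n → LubRel π π'
  | symm {π π' : List ℕ} : LubRel π π' → LubRel π' π
  | trans {π π' π'' : List ℕ} : LubRel π π' → LubRel π' π'' → LubRel π π''
  | snoc {i : ι} {σ π : List ℕ} {n : (g i).nodes} {j : ℕ} :
      LubRel σ π → (g i).tg.IsPos σ n → j < S.bot.ar ((g i).tg.lab n) →
      LubRel (σ ++ [j]) (π ++ [j])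

variable (g) in
def Represents (σ : List ℕ) (i : ι) (n : (g i).nodes) : Prop :=
  ∃ σ', LubRel g σ' σ ∧ (g i).tg.IsPos σ' n

variable (g) in
def HasSucc (σ : List ℕ) (j : ℕ) : Prop :=
  ∃ i n, Represents g σ i n ∧ j < S.bot.ar ((g i).tg.lab n)

theorem LubRel.refl_left {π π' : List ℕ} (h : LubRel g π π') : LubRel g π π :=
  h.trans h.symm

theorem LubRel.refl_right {π π' : List ℕ} (h : LubRel g π π') : LubRel g π' π' :=
  h.symm.trans h

theorem represents_of_isPos {σ : List ℕ} {i : ι} {n : (g i).nodes}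
    (h : (g i).tg.IsPos σ n) : Represents g σ i n :=
  ⟨σ, .of h h, h⟩

theorem Represents.of_lubRel {σ π : List ℕ} {i : ι} {n : (g i).nodes}
    (h : Represents g σ i n) (hσπ : LubRel g σ π) : Represents g π i n :=
  let ⟨σ', hσ', hn⟩ := h
  ⟨σ', hσ'.trans hσπ, hn⟩

theorem Represents.lubRel_refl {σ : List ℕ} {i : ι} {n : (g i).nodes}
    (h : Represents g σ i n) : LubRel g σ σ :=
  h.choose_spec.1.refl_right

theorem HasSucc.lubRel_snoc {σ π : List ℕ} {j : ℕ} (h : HasSucc g σ j)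
    (hσπ : LubRel g σ π) : LubRel g (σ ++ [j]) (π ++ [j]) := by
  obtain ⟨i, n, ⟨σ', hσ', hn⟩, hj⟩ := h
  exact (LubRel.snoc hσ' hn hj).symm.trans (.snoc (hσ'.trans hσπ) hn hj)

theorem LubRel.hasSucc_of_snoc {σ π : List ℕ} {j : ℕ} (h : LubRel g (σ ++ [j]) π) :
    HasSucc g σ j := by
  suffices ∀ {π π'}, LubRel g π π' → (∀ σ j, π = σ ++ [j] → HasSucc g σ j) ∧
      (∀ σ j, π' = σ ++ [j] → HasSucc g σ j) from (this h).1 σ j rfl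
  have of_isPos : ∀ {i π} {n : (g i).nodes}, (g i).tg.IsPos π n →
      ∀ σ j, π = σ ++ [j] → HasSucc g σ j := by
    rintro i _ n hn σ j rfl
    obtain ⟨m, hj, hm, -⟩ := isPos_snoc_iff.mp hn
    exact ⟨i, m, represents_of_isPos hm, hj⟩
  have of_snoc : ∀ {i σ π} {n : (g i).nodes} {j}, LubRel g σ π → (g i).tg.IsPos σ n →
      j < S.bot.ar ((g i).tg.lab n) →
      ∀ σ' j', π ++ [j] = σ' ++ [j'] → HasSucc g σ' j' := by
    intro i σ π n j hσπ hn hj σ' j' he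
    obtain ⟨rfl, he⟩ := List.append_inj' he rfl
    obtain rfl : j = j' := by simpa using he
    exact ⟨i, n, ⟨σ, hσπ, hn⟩, hj⟩
  intro π π' h
  induction h with
  | nil => exact ⟨fun _ _ he => by simp at he, fun _ _ he => by simp at he⟩
  | of hπ hπ' => exact ⟨of_isPos hπ, of_isPos hπ'⟩
  | symm _ ih => exact ⟨ih.2, ih.1⟩
  | trans _ _ ih ih' => exact ⟨ih.1, ih'.2⟩
  | snoc hσπ hn hj => exact ⟨of_snoc hσπ.refl_left hn hj, of_snoc hσπ hn hj⟩

theorem LubRel.exists_isPos (hψ : ∀ i, IsBotHom (g i).tg w.tg (ψ i)) {π π' : List ℕ}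
    (h : LubRel g π π') : ∃ q, w.tg.IsPos π q ∧ w.tg.IsPos π' q := by
  induction h with
  | nil => exact ⟨_, .root, .root⟩
  | of hπ hπ' => exact ⟨_, hπ.map (hψ _), hπ'.map (hψ _)⟩
  | symm _ ih =>
    obtain ⟨q, hq, hq'⟩ := ih
    exact ⟨q, hq', hq⟩
  | trans _ _ ih ih' =>
    obtain ⟨q, hq, hq'⟩ := ih
    obtain ⟨q', hq'', hq'''⟩ := ih'
    exact ⟨q, hq, hq''.unique hq' ▸ hq'''⟩
  | @snoc i σ π n j _ hn hj ih =>
    obtain ⟨q, hσ, hπ⟩ := ih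
    obtain rfl := (hn.map (hψ i)).unique hσ
    have hj' : j < S.bot.ar (w.tg.lab (ψ i n)) := by
      rw [(hψ i).lab_eq n (ne_none_of_lt_ar hj)]; exact hj
    exact ⟨_, hσ.step ⟨j, hj'⟩, hπ.step ⟨j, hj'⟩⟩

theorem Represents.isPos_map (hψ : ∀ i, IsBotHom (g i).tg w.tg (ψ i)) {σ : List ℕ} {i : ι}
    {n : (g i).nodes} (h : Represents g σ i n) : w.tg.IsPos σ (ψ i n) := by
  obtain ⟨σ', hσ', hn⟩ := h
  obtain ⟨q, hq, hq'⟩ := hσ'.exists_isPos hψ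
  exact (hn.map (hψ i)).unique hq ▸ hq'

variable (g) in
def lubCls (π : List ℕ) : Set (List ℕ) := {π' | LubRel g π π'}

variable (g) in
def lubNodes : Set (Set (List ℕ)) := {X | ∃ π, LubRel g π π ∧ X = lubCls g π}

theorem lubCls_eq {π π' : List ℕ} (h : LubRel g π π') : lubCls g π = lubCls g π' :=
  Set.ext fun _ => ⟨h.symm.trans, h.trans⟩

noncomputable def rep (X : lubNodes g) : List ℕ := X.2.choose

theorem rep_spec (X : lubNodes g) : LubRel g (rep X) (rep X) ∧ X.1 = lubCls g (rep X) :=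
  X.2.choose_spec

theorem lubRel_rep {X : lubNodes g} {π : List ℕ} (hX : X.1 = lubCls g π) :
    LubRel g (rep X) π := by
  have h : rep X ∈ X.1 := by rw [(rep_spec X).2]; exact (rep_spec X).1
  rw [hX] at h
  exact LubRel.symm h

theorem lubNodes_ext {X Y : lubNodes g} (h : LubRel g (rep X) (rep Y)) : X = Y :=
  Subtype.ext <| (rep_spec X).2.trans <| (lubCls_eq h).trans (rep_spec Y).2.symm

theorem Represents.lubRel {σ π : List ℕ} {i : ι} {n : (g i).nodes} (hσ : Represents g σ i n)
    (hπ : Represents g π i n) : LubRel g σ π := by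
  obtain ⟨σ', hσ', hσn⟩ := hσ
  obtain ⟨π', hπ', hπn⟩ := hπ
  exact hσ'.symm.trans ((LubRel.of hσn hπn).trans hπ')

variable (g) in
open Classical in
noncomputable def lubLab (σ : List ℕ) : S.bot.Sym :=
  if h : ∃ i n, Represents g σ i n ∧ (g i).tg.lab n ≠ none then
    (g h.choose).tg.lab h.choose_spec.choose
  else none

theorem exists_represents_of_lubLab_ne_none {σ : List ℕ} (h : lubLab g σ ≠ none) :
    ∃ i n, Represents g σ i n ∧ (g i).tg.lab n ≠ none := by
  by_contra hc
  exact h (dif_neg hc)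

theorem hasSucc_of_lt_ar {σ : List ℕ} {j : ℕ} (h : j < S.bot.ar (lubLab g σ)) :
    HasSucc g σ j := by
  by_cases hσ : ∃ i n, Represents g σ i n ∧ (g i).tg.lab n ≠ none
  · rw [show lubLab g σ = _ from dif_pos hσ] at h
    exact ⟨_, _, hσ.choose_spec.choose_spec.1, h⟩
  · rw [show lubLab g σ = none from dif_neg hσ] at h
    exact absurd h (Nat.not_lt_zero _)

theorem lubLab_eq (hφ : ∀ i, IsBotHom (g i).tg u.tg (φ i)) {σ : List ℕ} {i : ι}
    {n : (g i).nodes} (h : Represents g σ i n) (hn : (g i).tg.lab n ≠ none) :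
    lubLab g σ = (g i).tg.lab n := by
  have hex : ∃ i n, Represents g σ i n ∧ (g i).tg.lab n ≠ none := ⟨i, n, h, hn⟩
  obtain ⟨h', hn'⟩ := hex.choose_spec.choose_spec
  rw [show lubLab g σ = _ from dif_pos hex, ← (hφ _).lab_eq _ hn', ← (hφ i).lab_eq n hn,
    (h'.isPos_map hφ).unique (h.isPos_map hφ)]

variable (g) in
noncomputable def lubGraph : TermGraph S.bot (lubNodes g) where
  lab X := lubLab g (rep X)
  suc X j := ⟨lubCls g (rep X ++ [(j : ℕ)]), _,
    ((hasSucc_of_lt_ar j.isLt).lubRel_snoc (rep_spec X).1).refl_right, rfl⟩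
  root := ⟨lubCls g [], [], .nil, rfl⟩

theorem val_eq_lubCls_of_isPos {π : List ℕ} {X : lubNodes g} (h : (lubGraph g).IsPos π X) :
    X.1 = lubCls g π := by
  induction h with
  | root => rfl
  | step _ i ih => exact lubCls_eq ((hasSucc_of_lt_ar i.isLt).lubRel_snoc (lubRel_rep ih))

theorem isPos_lubGraph_iff (hφ : ∀ i, IsBotHom (g i).tg u.tg (φ i)) {π : List ℕ}
    {X : lubNodes g} :
    (lubGraph g).IsPos π X ↔ X.1 = lubCls g π := by
  refine ⟨val_eq_lubCls_of_isPos, fun hX => ?_⟩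
  induction π using List.reverseRecOn generalizing X with
  | nil => exact (Subtype.ext hX : X = (lubGraph g).root) ▸ IsPos.root
  | append_singleton π j ih =>
    obtain ⟨i, n, hn, hj⟩ := (lubRel_rep hX).refl_right.hasSucc_of_snoc
    let Y : lubNodes g := ⟨lubCls g π, π, hn.lubRel_refl, rfl⟩
    have hYj : j < S.bot.ar ((lubGraph g).lab Y) := by
      rw [show (lubGraph g).lab Y = (g i).tg.lab n from
        lubLab_eq hφ (hn.of_lubRel (lubRel_rep rfl).symm) (ne_none_of_lt_ar hj)]
      exact hj
    have hsuc : (lubGraph g).suc Y ⟨j, hYj⟩ = X :=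
      Subtype.ext <| (lubCls_eq ((hasSucc_of_lt_ar hYj).lubRel_snoc (lubRel_rep rfl))).trans hX.symm
    exact hsuc ▸ (ih rfl).step ⟨j, hYj⟩

variable (g) in
/-- Only the proof fields depend on the upper bound `u`: it shows that the labels of classes
are well defined. -/
noncomputable def lub (hφ : ∀ i, IsBotHom (g i).tg u.tg (φ i)) : CTG S.bot where
  nodes := lubNodes g
  tg := lubGraph g
  reach X := ⟨rep X, (isPos_lubGraph_iff hφ).2 (rep_spec X).2⟩
  canon X := by
    ext π
    rw [(rep_spec X).2]
    exact ⟨fun h => (isPos_lubGraph_iff hφ).2 ((rep_spec X).2.trans (lubCls_eq h)),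
      fun h => lubRel_rep (val_eq_lubCls_of_isPos h)⟩

noncomputable def toLub (i : ι) (n : (g i).nodes) : lubNodes g :=
  have hn := ((g i).reach n).choose_spec
  ⟨lubCls g ((g i).reach n).choose, _, .of hn hn, rfl⟩

theorem represents_rep_toLub (i : ι) (n : (g i).nodes) :
    Represents g (rep (toLub i n)) i n :=
  ⟨_, (lubRel_rep rfl).symm, ((g i).reach n).choose_spec⟩

theorem toLub_isBotHom (hφ : ∀ i, IsBotHom (g i).tg u.tg (φ i)) (i : ι) :
    IsBotHom (g i).tg (lub g hφ).tg (toLub i) :=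
  isDHom_of_isPos (g i).reach
    (fun _ _ hπ => (isPos_lubGraph_iff hφ).2
      (lubCls_eq (.of ((g i).reach _).choose_spec hπ)))
    (fun n hn => lubLab_eq hφ (represents_rep_toLub i n) hn)

variable (w) in
noncomputable def fromLub (X : lubNodes g) : w.nodes := w.tg.nodeAt (rep X)

theorem fromLub_eq (hψ : ∀ i, IsBotHom (g i).tg w.tg (ψ i)) {X : lubNodes g} {i : ι}
    {n : (g i).nodes} (h : Represents g (rep X) i n) : fromLub w X = ψ i n :=
  nodeAt_eq (h.isPos_map hψ)

theorem fromLub_isBotHom (hφ : ∀ i, IsBotHom (g i).tg u.tg (φ i))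
    (hψ : ∀ i, IsBotHom (g i).tg w.tg (ψ i)) : IsBotHom (lub g hφ).tg w.tg (fromLub w) := by
  refine isDHom_of_isPos (lub g hφ).reach (fun π X hπ => ?_) (fun X hX => ?_)
  · obtain ⟨q, hq, hq'⟩ := (lubRel_rep (val_eq_lubCls_of_isPos hπ)).exists_isPos hψ
    rwa [show fromLub w X = q from nodeAt_eq hq]
  · obtain ⟨i, n, hn, hn'⟩ := exists_represents_of_lubLab_ne_none hX
    rw [fromLub_eq (fun i => hψ i) hn, (hψ i).lab_eq n hn']
    exact (lubLab_eq hφ hn hn').symm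

theorem fromLub_isRigidBotHom (hφ : ∀ i, IsBotHom (g i).tg u.tg (φ i))
    (hψ : ∀ i, IsRigidBotHom (g i).tg w.tg (ψ i)) :
    IsRigidBotHom (lub g hφ).tg w.tg (fromLub w) := by
  have hψ' i := (hψ i).1
  refine isRigid_of_injective (fromLub_isBotHom hφ hψ') (fun X Y hX hY hXY => ?_)
    (fun X hX π hπ => ?_)
  · obtain ⟨i, n, hn, hn'⟩ := exists_represents_of_lubLab_ne_none hX
    obtain ⟨i', m, hm, hm'⟩ := exists_represents_of_lubLab_ne_none hY
    rw [fromLub_eq hψ' hn, fromLub_eq hψ' hm] at hXY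
    obtain ⟨τ, hτn, hτm⟩ :=
      exists_isPos_isPos_of_isRigid (hψ i) (hψ i') hn' hm' hXY ((g i).reach n)
    exact lubNodes_ext <| (hn.lubRel (represents_of_isPos hτn)).trans
      ((represents_of_isPos hτm).lubRel hm)
  · obtain ⟨i, n, hn, hn'⟩ := exists_represents_of_lubLab_ne_none hX
    rw [fromLub_eq hψ' hn, ← (hψ i).2 n hn'] at hπ
    exact (isPos_lubGraph_iff hφ).2 <|
      (rep_spec X).2.trans (lubCls_eq (hn.lubRel (represents_of_isPos hπ.1)))

theorem toLub_isRigidBotHom (hφ : ∀ i, IsRigidBotHom (g i).tg u.tg (φ i)) (i : ι) :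
    IsRigidBotHom (g i).tg (lub g fun i => (hφ i).1).tg (toLub i) := by
  have hφ' i := (hφ i).1
  refine ⟨toLub_isBotHom hφ' i, fun n hn => ?_⟩
  have hlab : (lub g hφ').tg.lab (toLub i n) ≠ none := by
    rw [(toLub_isBotHom hφ' i).lab_eq n hn]; exact hn
  rw [(hφ i).2 n hn, (fromLub_isRigidBotHom hφ' hφ).2 _ hlab,
    fromLub_eq hφ' (represents_rep_toLub i n)]

theorem isLubR_range_lub (hφ : ∀ i, IsRigidBotHom (g i).tg u.tg (φ i)) :
    IsLubR (Set.range g) (lub g fun i => (hφ i).1) := by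
  refine ⟨?_, fun w hw => ?_⟩
  · rintro _ ⟨i, rfl⟩
    exact ⟨toLub i, toLub_isRigidBotHom hφ i⟩
  · choose ψ hψ using fun i => hw (g i) ⟨i, rfl⟩
    exact ⟨fromLub w, fromLub_isRigidBotHom _ hψ⟩

theorem exists_isLubR_of_isUB {A : Set (CTG S.bot)} (hu : IsUB A u) : ∃ v, IsLubR A v := by
  choose φ hφ using fun g : A => hu g g.2
  exact ⟨_, Subtype.range_coe (s := A) ▸ isLubR_range_lub hφ⟩

end CTG

/-- Every pair of compatible canonical partial term graphs
(i.e. a pair having an upper bound w.r.t. `≤⊥r`) has a least upper bound. -/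
theorem compatible_have_lub (S : Signature) (g₁ g₂ u : CTG S.bot)
    (h₁ : CTG.LeR g₁ u) (h₂ : CTG.LeR g₂ u) :
    ∃ v, CTG.IsLubR {g₁, g₂} v :=
  CTG.exists_isLubR_of_isUB (u := u) (by rintro g (rfl | rfl); exacts [h₁, h₂])

end TGR
end

section
/- For every partial term graph g over Σ_⊥ and every d ≤ ω, the rigid truncation of g at depth d is smaller than g in the rigid partial order: g†d ≤⊥r g (i.e., there is a rigid ⊥-homomorphism from g†d to g). -/
set_option autoImplicit false

/-!
The truncation maps back into `g`: a retained node to itself, a fringe node `n^i` to the `i`-th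
successor of `n`, and the fringe root at depth `0` to the root. This is a `⊥`-homomorphism. It is
rigid because an acyclic position of a retained node `n` never crosses a fringe edge: every node it
passes is an acyclic predecessor of the next one, hence retained, so the position lifts to `g†d`;
conversely, the map is injective on non-`⊥` nodes, so acyclicity transfers from `g†d` to `g`.
-/

namespace TGR

namespace TermGraph

variable {S : Signature} {N M : Type}

section Positions

variable {g : TermGraph S N}

theorem IsPos.eq_root_of_nil {n : N} (h : g.IsPos [] n) : n = g.root := by
  generalize hπ : ([] : List ℕ) = π at h
  cases h with
  | root => rfl
  | step => simp at hπ

theorem IsPos.exists_of_concat {π : List ℕ} {j : ℕ} {y : N} (h : g.IsPos (π ++ [j]) y) :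
    ∃ x, g.IsPos π x ∧ ∃ hj : j < S.ar (g.lab x), y = g.suc x ⟨j, hj⟩ := by
  generalize hρ : π ++ [j] = ρ at h
  cases h with
  | root => simp at hρ
  | @step π' x hx i =>
    obtain ⟨rfl, hij⟩ := List.append_inj' hρ rfl
    obtain rfl : j = i := by simpa using hij
    exact ⟨x, hx, i.isLt, rfl⟩

theorem IsPos.unique_s11 {π : List ℕ} {n n' : N} (h : g.IsPos π n) (h' : g.IsPos π n') :
    n = n' := by
  induction h generalizing n' with
  | root => exact h'.eq_root_of_nil.symm
  | step _ i ih =>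
    obtain ⟨x, hx, _, rfl⟩ := h'.exists_of_concat
    cases ih hx
    rfl

theorem IsPos.exists_of_prefix {π π' : List ℕ} {n : N} (h : g.IsPos π n) (hp : π' <+: π) :
    ∃ m, g.IsPos π' m := by
  induction h with
  | root => exact ⟨g.root, List.prefix_nil.mp hp ▸ IsPos.root⟩
  | step h i ih =>
    rcases List.prefix_concat_iff.mp hp with rfl | hp
    · exact ⟨_, h.step i⟩
    · exact ih hp

theorem IsAcyclicPos.of_prefix {π π' : List ℕ} (h : g.IsAcyclicPos π) (hp : π' <+: π) :
    g.IsAcyclicPos π' :=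
  fun π₁ π₂ n h₁ h₂ => h π₁ π₂ n h₁ (h₂.trans hp)

theorem mem_acyPred_of_isAcyclicPos {π : List ℕ} {m : N} (h : g.IsPos π m)
    (i : Fin (S.ar (g.lab m))) (hacy : g.IsAcyclicPos (π ++ [(i : ℕ)])) :
    m ∈ g.acyPred (g.suc m i) :=
  ⟨π, i, ⟨h.step i, hacy⟩, h⟩

end Positions

section BotHom

variable {g : TermGraph S.bot N} {h : TermGraph S.bot M}

theorem ne_none_of_lt_ar_s11 {o : S.bot.Sym} {i : ℕ} (hi : i < S.bot.ar o) : o ≠ none := by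
  rintro rfl
  exact Nat.not_lt_zero i hi

/-- A node on a proper prefix of a position has a successor, so is not `⊥`. -/
theorem IsPos.lab_ne_none_of_prefix_s11 {π π' : List ℕ} {x y : N} (hx : g.IsPos π x)
    (hlab : g.lab x ≠ none) (hp : π' <+: π) (hy : g.IsPos π' y) : g.lab y ≠ none := by
  rcases eq_or_ne π' π with rfl | hne
  · rwa [hy.unique_s11 hx]
  obtain ⟨_ | ⟨j, t⟩, rfl⟩ := hp
  · simp at hne
  obtain ⟨z, hz⟩ := hx.exists_of_prefix (show π' ++ [j] <+: π' ++ j :: t from ⟨t, by simp⟩)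
  obtain ⟨y', hy', hj, -⟩ := hz.exists_of_concat
  rw [hy.unique_s11 hy']
  exact ne_none_of_lt_ar_s11 hj

theorem IsDHom.isPos_map {φ : N → M} (hφ : IsDHom ({none} : Set (Option S.Sym)) g h φ)
    {π : List ℕ} {n : N} (hn : g.IsPos π n) : h.IsPos π (φ n) := by
  induction hn with
  | root => exact hφ.root_eq ▸ IsPos.root
  | @step π n _ i ih =>
    have hlab : g.lab n ∉ ({none} : Set (Option S.Sym)) := ne_none_of_lt_ar_s11 i.isLt
    have hi : (i : ℕ) < S.bot.ar (h.lab (φ n)) := by rw [hφ.lab_eq n hlab]; exact i.isLt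
    rw [show i = ⟨i, i.isLt⟩ from rfl, hφ.suc_eq n hlab i i.isLt hi]
    exact ih.step ⟨i, hi⟩

theorem IsDHom.isAcyclicPos_of_map {φ : N → M} (hφ : IsDHom ({none} : Set (Option S.Sym)) g h φ)
    {π : List ℕ} (hacy : h.IsAcyclicPos π) : g.IsAcyclicPos π :=
  fun π₁ π₂ n h₁ h₂ hn₁ hn₂ => hacy π₁ π₂ (φ n) h₁ h₂ (hφ.isPos_map hn₁) (hφ.isPos_map hn₂)

theorem IsDHom.isAcyclicPos_map {φ : N → M} (hφ : IsDHom ({none} : Set (Option S.Sym)) g h φ)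
    (hinj : Set.InjOn φ {x | g.lab x ≠ none})
    {π : List ℕ} {x : N} (hx : g.IsPos π x) (hlab : g.lab x ≠ none)
    (hacy : g.IsAcyclicPos π) : h.IsAcyclicPos π := by
  intro π₁ π₂ n h₁ h₂ hn₁ hn₂
  obtain ⟨y₁, hy₁⟩ := hx.exists_of_prefix (h₁.trans h₂)
  obtain ⟨y₂, hy₂⟩ := hx.exists_of_prefix h₂
  have hy : y₁ = y₂ :=
    hinj (hx.lab_ne_none_of_prefix_s11 hlab (h₁.trans h₂) hy₁)
      (hx.lab_ne_none_of_prefix_s11 hlab h₂ hy₂)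
      (((hφ.isPos_map hy₁).unique_s11 hn₁).trans ((hφ.isPos_map hy₂).unique_s11 hn₂).symm)
  exact hacy π₁ π₂ y₁ h₁ h₂ hy₁ (hy ▸ hy₂)

theorem isRigidBotHom_id (g : TermGraph S.bot N) : IsRigidBotHom g g id :=
  ⟨⟨rfl, fun _ _ => rfl, fun _ _ _ _ _ => rfl⟩, fun _ _ => rfl⟩

end BotHom

section Truncation

variable {g : TermGraph S.bot N} {d : ℕ}

theorem Retained.ne_zero {n : N} (hn : g.Retained d n) : d ≠ 0 := by
  rintro rfl
  exact not_retained_zero n hn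

/-- The map `g†d → g`; at depth `0` the single fringe node stands for the root. -/
noncomputable def truncMap (g : TermGraph S.bot N) (d : ℕ) : TNode g d → N
  | ⟨Sum.inl n, _⟩ => n
  | ⟨Sum.inr (n, i), _⟩ =>
    if d = 0 then g.root else if h : i < S.bot.ar (g.lab n) then g.suc n ⟨i, h⟩ else g.root

theorem trunc_root_of_retained (hr : g.Retained d g.root) :
    (g.trunc d).root = ⟨Sum.inl g.root, hr⟩ :=
  dif_neg hr.ne_zero

theorem truncMap_root : truncMap g d (g.trunc d).root = g.root := by
  show truncMap g d (truncRoot g d) = g.root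
  unfold truncRoot
  split_ifs with hd <;> simp [truncMap, hd]

theorem truncMap_trunc_suc {n : N} (hn : g.Retained d n) (i : Fin (S.bot.ar (g.lab n))) :
    truncMap g d ((g.trunc d).suc ⟨Sum.inl n, hn⟩ i) = g.suc n i := by
  show truncMap g d (truncSuc g d ⟨Sum.inl n, hn⟩ i) = g.suc n i
  by_cases hf : g.IsFringe d (n, i)
  · rw [show truncSuc g d ⟨Sum.inl n, hn⟩ i = ⟨Sum.inr (n, i), hf⟩ from dif_pos hf]
    simp [truncMap, hn.ne_zero]
  · rw [show truncSuc g d ⟨Sum.inl n, hn⟩ i = ⟨Sum.inl (g.suc n i), _⟩ from dif_neg hf]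
    rfl

theorem trunc_suc_of_not_isFringe {n : N} (hn : g.Retained d n) (i : Fin (S.bot.ar (g.lab n)))
    (hf : ¬ g.IsFringe d (n, i)) (hs : g.Retained d (g.suc n i)) :
    (g.trunc d).suc ⟨Sum.inl n, hn⟩ i = ⟨Sum.inl (g.suc n i), hs⟩ := by
  show truncSuc g d ⟨Sum.inl n, hn⟩ i = _
  exact dif_neg hf

theorem not_isFringe_of_mem_acyPred {m : N} (i : Fin (S.bot.ar (g.lab m)))
    (hs : g.Retained d (g.suc m i)) (hm : m ∈ g.acyPred (g.suc m i)) :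
    ¬ g.IsFringe d (m, i) := by
  rw [IsFringe, if_neg hs.ne_zero]
  rintro ⟨-, _, hcut | ⟨-, hcut⟩⟩
  · exact hcut hs
  · exact hcut hm

theorem truncMap_isDHom :
    IsDHom ({none} : Set (Option S.Sym)) (g.trunc d) g (truncMap g d) where
  root_eq := truncMap_root
  lab_eq := by
    rintro ⟨_ | _, _⟩ hlab
    · rfl
    · exact absurd rfl hlab
  suc_eq := by
    rintro ⟨n | _, hn⟩ hlab i hi hi'
    · exact truncMap_trunc_suc hn ⟨i, hi⟩
    · exact absurd rfl hlab

theorem truncMap_injOn : Set.InjOn (truncMap g d) {x | (g.trunc d).lab x ≠ none} := by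
  intro x hx y hy hxy
  obtain ⟨_ | _, _⟩ := x
  · obtain ⟨_ | _, _⟩ := y
    · exact Subtype.ext (congrArg Sum.inl hxy)
    · exact absurd rfl hy
  · exact absurd rfl hx

theorem IsPos.lift_trunc {π : List ℕ} {n : N} (h : g.IsPos π n) (hacy : g.IsAcyclicPos π)
    (hn : g.Retained d n) : (g.trunc d).IsPos π ⟨Sum.inl n, hn⟩ := by
  induction h with
  | root => exact trunc_root_of_retained hn ▸ IsPos.root
  | @step π m h i ih =>
    have hm : m ∈ g.acyPred (g.suc m i) := mem_acyPred_of_isAcyclicPos h i hacy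
    have hmr : g.Retained d m := hn.pred hm
    have hlift := (ih (hacy.of_prefix (List.prefix_append _ _)) hmr).step i
    rwa [trunc_suc_of_not_isFringe hmr i (not_isFringe_of_mem_acyPred i hn hm) hn] at hlift

theorem trunc_nodePosAcy_inl {n : N} (hn : g.Retained d n) (hlab : g.lab n ≠ none) :
    (g.trunc d).nodePosAcy ⟨Sum.inl n, hn⟩ = g.nodePosAcy n := by
  ext π
  constructor
  · rintro ⟨hπ, hacy⟩
    exact ⟨truncMap_isDHom.isPos_map hπ,
      truncMap_isDHom.isAcyclicPos_map truncMap_injOn hπ hlab hacy⟩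
  · rintro ⟨hπ, hacy⟩
    exact ⟨hπ.lift_trunc hacy hn, truncMap_isDHom.isAcyclicPos_of_map hacy⟩

theorem truncMap_isRigidBotHom : IsRigidBotHom (g.trunc d) g (truncMap g d) := by
  refine ⟨truncMap_isDHom, ?_⟩
  rintro ⟨n | _, hn⟩ hlab
  · exact trunc_nodePosAcy_inl hn hlab
  · exact absurd rfl hlab

end Truncation

end TermGraph

theorem trunc_leR_self_general (S : Signature) (N : Type) (g : TermGraph S.bot N) :
    (∀ d : ℕ, ∃ φ, TermGraph.IsRigidBotHom (g.trunc d) g φ) ∧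
    (∃ φ, TermGraph.IsRigidBotHom g g φ) :=
  ⟨fun _ => ⟨_, TermGraph.truncMap_isRigidBotHom⟩, ⟨id, TermGraph.isRigidBotHom_id g⟩⟩

/-- For every partial term graph `g` and every `d ≤ ω`, the
rigid truncation of `g` at depth `d` is below `g` in the rigid partial order,
i.e. there is a rigid `⊥`-homomorphism from `g†d` to `g` (for `d = ω` one has
`g†ω = g`). -/
theorem trunc_leR_self (S : Signature) (N : Type) (g : TermGraph S.bot N)
    (hg : g.Reachable) :
    (∀ d : ℕ, ∃ φ, TermGraph.IsRigidBotHom (g.trunc d) g φ) ∧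
    (∃ φ, TermGraph.IsRigidBotHom g g φ) :=
  trunc_leR_self_general S N g

end TGR
end
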